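/- Let G be a G-metric on a nonempty set X and let T : X → X satisfy: (I) for all x ∈ X, if Tx ≠ x then T(Tx) ≠ x, and (II) there exists λ ∈ (0,1/3) such that G(Tx,Ty,Tz) ≤ λ·[G(x,Tx,Tx) + G(y,Ty,Ty) + G(z,Tz,Tz)] for all pairwise distinct points x, y, z ∈ X. Let u₀ ∈ X and let the Picard sequence be defined by u_{n+1} = T u_n for n ≥ 0, and assume u_n ≠ u_{n+1} for all n ≥ 0. Then for every n ≥ 0 one has G(u_n, u_{n+1}, u_{n+2}) ≤ kⁿ·G(u₀,u₁,u₂) where k = λ/(1−2λ) ∈ (0,1), and {u_n} is a G-Cauchy sequence. -/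

import Mathlib

open Filter

/-- A G-metric on `X` in the sense of Mustafa and Sims: (P1) `G x y z = 0` iff `x = y = z`;
(P2) `G x x y > 0` if `x ≠ y`; (P3) invariance under all permutations of the arguments
(generated by the two swaps below); (P4) `G x x y ≤ G x y z` if `y ≠ z`;
(P5) `G x y z ≤ G x w w + G w y z`. The codomain is `[0, ∞)`, encoded by `nonneg`. -/
structure IsGMetric {X : Type*} (G : X → X → X → ℝ) : Prop where
  nonneg : ∀ x y z, 0 ≤ G x y z
  eq_zero_iff : ∀ x y z, G x y z = 0 ↔ x = y ∧ y = z
  pos_of_ne : ∀ x y, x ≠ y → 0 < G x x y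
  swap_left : ∀ x y z, G x y z = G y x z
  swap_right : ∀ x y z, G x y z = G x z y
  le_of_ne : ∀ x y z, y ≠ z → G x x y ≤ G x y z
  triangle : ∀ x y z w, G x y z ≤ G x w w + G w y z

/-- A sequence `u` is `G`-Cauchy if `G (u n) (u m) (u m) → 0` as `n, m → ∞`. -/
def GCauchy {X : Type*} (G : X → X → X → ℝ) (u : ℕ → X) : Prop :=
  Tendsto (fun p : ℕ × ℕ => G (u p.1) (u p.2) (u p.2)) atTop (nhds 0)

/-- A sequence `u` is `G`-convergent to `x` if `G (u n) x x → 0` as `n → ∞`. -/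
def GConvergent {X : Type*} (G : X → X → X → ℝ) (u : ℕ → X) (x : X) : Prop :=
  Tendsto (fun n => G (u n) x x) atTop (nhds 0)

/-- `(X, G)` is complete if every `G`-Cauchy sequence is `G`-convergent to some point. -/
def GComplete {X : Type*} (G : X → X → X → ℝ) : Prop :=
  ∀ u : ℕ → X, GCauchy G u → ∃ x, GConvergent G u x

/-
The Kannan condition applied to the pairwise distinct triple `uₙ, uₙ₊₁, uₙ₊₂` (distinct by
(I) and `uₙ ≠ uₙ₊₁`) bounds `dₙ₊₁ = G(uₙ₊₁, uₙ₊₂, uₙ₊₃)` by `λ (dₙ + 2 dₙ₊₁)`, since each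
term `G(x, Tx, Tx)` on the right is dominated by one of `dₙ, dₙ₊₁` through (P4). Hence
`dₙ₊₁ ≤ k dₙ` with `k = λ/(1-2λ)`, so `dₙ ≤ kⁿ d₀`, and summing the triangle inequality over a
geometric series makes `{uₙ}` G-Cauchy.
-/

namespace IsGMetric

variable {X : Type*} {G : X → X → X → ℝ}

theorem rotate (hG : IsGMetric G) (x y z : X) : G x y z = G z x y :=
  (hG.swap_right x y z).trans (hG.swap_left x z y)

theorem le_of_ne_right (hG : IsGMetric G) {a c : X} (b : X) (h : a ≠ c) :
    G a b b ≤ G a b c :=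
  calc G a b b = G b b a := by rw [hG.swap_left a b b, hG.swap_right b a b]
    _ ≤ G b a c := hG.le_of_ne b a c h
    _ = G a b c := hG.swap_left b a c

theorem le_two_mul_swap (hG : IsGMetric G) (x y : X) : G x y y ≤ 2 * G y x x := by
  linarith [hG.triangle y y x x, hG.swap_left x y x, hG.swap_left x y y, hG.swap_right y x y]

theorem le_sum_Ico (hG : IsGMetric G) (u : ℕ → X) {n m : ℕ} (hnm : n ≤ m) :
    G (u n) (u m) (u m) ≤ ∑ i ∈ Finset.Ico n m, G (u i) (u (i + 1)) (u (i + 1)) := by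
  induction m, hnm using Nat.le_induction with
  | base => simp [(hG.eq_zero_iff _ _ _).2 ⟨rfl, rfl⟩]
  | succ m hnm ih =>
    rw [Finset.sum_Ico_succ_top hnm]
    linarith [hG.triangle (u n) (u (m + 1)) (u (m + 1)) (u m)]

theorem le_geometric_tail (hG : IsGMetric G) {u : ℕ → X} {C k : ℝ} (hk0 : 0 ≤ k)
    (hk1 : k < 1) (hu : ∀ n, G (u n) (u (n + 1)) (u (n + 1)) ≤ C * k ^ n) {n m : ℕ}
    (hnm : n ≤ m) : G (u n) (u m) (u m) ≤ C / (1 - k) * k ^ n := by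
  have hC : 0 ≤ C := by simpa using (hG.nonneg _ _ _).trans (hu 0)
  calc G (u n) (u m) (u m)
      ≤ ∑ i ∈ Finset.Ico n m, G (u i) (u (i + 1)) (u (i + 1)) := hG.le_sum_Ico u hnm
    _ ≤ ∑ i ∈ Finset.Ico n m, C * k ^ i := Finset.sum_le_sum fun i _ => hu i
    _ = C * ∑ i ∈ Finset.Ico n m, k ^ i := (Finset.mul_sum ..).symm
    _ ≤ C * (k ^ n / (1 - k)) := by gcongr; exact geom_sum_Ico_le_of_lt_one hk0 hk1
    _ = C / (1 - k) * k ^ n := by ring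

theorem gCauchy_of_le_geometric (hG : IsGMetric G) {u : ℕ → X} {C k : ℝ} (hk0 : 0 ≤ k)
    (hk1 : k < 1) (hu : ∀ n, G (u n) (u (n + 1)) (u (n + 1)) ≤ C * k ^ n) : GCauchy G u := by
  have hC : 0 ≤ C := by simpa using (hG.nonneg _ _ _).trans (hu 0)
  have hD : 0 ≤ C / (1 - k) := div_nonneg hC (sub_pos.2 hk1).le
  have hbound (n m : ℕ) : G (u n) (u m) (u m) ≤ 2 * (C / (1 - k)) * (k ^ n + k ^ m) := by
    have hn := mul_nonneg hD (pow_nonneg hk0 n)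
    have hm := mul_nonneg hD (pow_nonneg hk0 m)
    rcases le_total n m with hnm | hmn
    · linarith [hG.le_geometric_tail hk0 hk1 hu hnm]
    · linarith [hG.le_two_mul_swap (u n) (u m), hG.le_geometric_tail hk0 hk1 hu hmn]
  have hpow := tendsto_pow_atTop_nhds_zero_of_lt_one hk0 hk1
  have hlim : Tendsto (fun p : ℕ × ℕ => 2 * (C / (1 - k)) * (k ^ p.1 + k ^ p.2))
      atTop (nhds 0) := by
    rw [← prod_atTop_atTop_eq]
    simpa using ((hpow.comp tendsto_fst).add (hpow.comp tendsto_snd)).const_mul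
      (2 * (C / (1 - k)))
  exact squeeze_zero (fun _ => hG.nonneg _ _ _) (fun p => hbound p.1 p.2) hlim

end IsGMetric

section Kannan

variable {X : Type*} {G : X → X → X → ℝ} {T : X → X} {u : ℕ → X}

theorem picard_ne_add_two (hI : ∀ x : X, T x ≠ x → T (T x) ≠ x)
    (hu : ∀ n, u (n + 1) = T (u n)) (hne : ∀ n, u n ≠ u (n + 1)) (n : ℕ) :
    u n ≠ u (n + 2) := by
  rw [hu (n + 1), hu n]
  exact (hI (u n) (hu n ▸ (hne n).symm)).symm

theorem kannan_picard_step (hG : IsGMetric G) (hI : ∀ x : X, T x ≠ x → T (T x) ≠ x)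
    {lam : ℝ} (hlam0 : 0 ≤ lam) (hlam1 : lam < 1 / 2)
    (hII : ∀ x y z : X, x ≠ y → x ≠ z → y ≠ z →
      G (T x) (T y) (T z) ≤ lam * (G x (T x) (T x) + G y (T y) (T y) + G z (T z) (T z)))
    (hu : ∀ n, u (n + 1) = T (u n)) (hne : ∀ n, u n ≠ u (n + 1)) (n : ℕ) :
    G (u (n + 1)) (u (n + 2)) (u (n + 3)) ≤
      lam / (1 - 2 * lam) * G (u n) (u (n + 1)) (u (n + 2)) := by
  have hne2 := picard_ne_add_two hI hu hne
  have hkannan : G (u (n + 1)) (u (n + 2)) (u (n + 3)) ≤ lam *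
      (G (u n) (u (n + 1)) (u (n + 1)) + G (u (n + 1)) (u (n + 2)) (u (n + 2)) +
        G (u (n + 2)) (u (n + 3)) (u (n + 3))) := by
    simpa only [hu] using hII (u n) (u (n + 1)) (u (n + 2)) (hne n) (hne2 n) (hne (n + 1))
  have hterm₀ : G (u n) (u (n + 1)) (u (n + 1)) ≤ G (u n) (u (n + 1)) (u (n + 2)) :=
    hG.le_of_ne_right _ (hne2 n)
  have hterm₁ : G (u (n + 1)) (u (n + 2)) (u (n + 2)) ≤ G (u (n + 1)) (u (n + 2)) (u (n + 3)) :=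
    hG.le_of_ne_right _ (hne2 (n + 1))
  have hterm₂ : G (u (n + 2)) (u (n + 3)) (u (n + 3)) ≤ G (u (n + 1)) (u (n + 2)) (u (n + 3)) :=
    (hG.le_of_ne_right _ (hne (n + 1)).symm).trans_eq (hG.rotate _ _ _)
  rw [div_mul_eq_mul_div, le_div_iff₀ (by linarith)]
  linarith [mul_le_mul_of_nonneg_left (add_le_add (add_le_add hterm₀ hterm₁) hterm₂) hlam0]

end Kannan

theorem picard_estimates_kannan_general {X : Type*}
    (G : X → X → X → ℝ) (hG : IsGMetric G)
    (T : X → X)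
    (hI : ∀ x : X, T x ≠ x → T (T x) ≠ x)
    (lam : ℝ) (hlam0 : 0 < lam) (hlam1 : lam < 1 / 3)
    (hII : ∀ x y z : X, x ≠ y → x ≠ z → y ≠ z →
      G (T x) (T y) (T z) ≤
        lam * (G x (T x) (T x) + G y (T y) (T y) + G z (T z) (T z)))
    (u : ℕ → X) (hu : ∀ n : ℕ, u (n + 1) = T (u n))
    (hne : ∀ n : ℕ, u n ≠ u (n + 1)) :
    (0 < lam / (1 - 2 * lam) ∧ lam / (1 - 2 * lam) < 1) ∧
    (∀ n : ℕ, G (u n) (u (n + 1)) (u (n + 2)) ≤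
      (lam / (1 - 2 * lam)) ^ n * G (u 0) (u 1) (u 2)) ∧
    GCauchy G u := by
  have h2 : 0 < 1 - 2 * lam := by linarith
  have hk0 : 0 < lam / (1 - 2 * lam) := div_pos hlam0 h2
  have hk1 : lam / (1 - 2 * lam) < 1 := by rw [div_lt_one h2]; linarith
  have hgeo (n : ℕ) : G (u n) (u (n + 1)) (u (n + 2)) ≤
      (lam / (1 - 2 * lam)) ^ n * G (u 0) (u 1) (u 2) :=
    le_geom (u := fun n => G (u n) (u (n + 1)) (u (n + 2))) hk0.le n fun m _ =>
      kannan_picard_step hG hI hlam0.le (by linarith) hII hu hne m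
  refine ⟨⟨hk0, hk1⟩, hgeo, hG.gCauchy_of_le_geometric (C := G (u 0) (u 1) (u 2)) hk0.le hk1
    fun n => ?_⟩
  rw [mul_comm]
  exact (hG.le_of_ne_right _ (picard_ne_add_two hI hu hne n)).trans (hgeo n)

/-- Picard sequence estimates for the Kannan-type contraction on pairwise distinct triples:
with `k = λ/(1-2λ) ∈ (0,1)`, `G (u n) (u (n+1)) (u (n+2)) ≤ kⁿ G(u₀,u₁,u₂)`, and `u` is
G-Cauchy. -/
theorem picard_estimates_kannan {X : Type*} [Nonempty X]
    (G : X → X → X → ℝ) (hG : IsGMetric G)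
    (T : X → X)
    (hI : ∀ x : X, T x ≠ x → T (T x) ≠ x)
    (lam : ℝ) (hlam0 : 0 < lam) (hlam1 : lam < 1 / 3)
    (hII : ∀ x y z : X, x ≠ y → x ≠ z → y ≠ z →
      G (T x) (T y) (T z) ≤
        lam * (G x (T x) (T x) + G y (T y) (T y) + G z (T z) (T z)))
    (u : ℕ → X) (hu : ∀ n : ℕ, u (n + 1) = T (u n))
    (hne : ∀ n : ℕ, u n ≠ u (n + 1)) :
    (0 < lam / (1 - 2 * lam) ∧ lam / (1 - 2 * lam) < 1) ∧
    (∀ n : ℕ, G (u n) (u (n + 1)) (u (n + 2)) ≤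
      (lam / (1 - 2 * lam)) ^ n * G (u 0) (u 1) (u 2)) ∧
    GCauchy G u :=
  picard_estimates_kannan_general G hG T hI lam hlam0 hlam1 hII u hu hne
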